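/- arXiv:0911.2294 — 2 statements merged into one kernel-verified Lean document; each statement's English description precedes it below -/
import Mathlib

section
/- Let Ω ⊂ ℝ² be a bounded simply connected domain and τ⁰ the solution of −Δτ⁰ = 1 in Ω with τ⁰ = 0 on ∂Ω. Suppose τ⁰ is radial about some point x₀ ∈ Ω in a neighborhood of x₀, i.e., τ⁰(x) = g(|x − x₀|) near x₀ for some function g. Then Ω is a disc centered at x₀ and τ⁰(x) = (R² − |x − x₀|²)/4 where R is the radius of Ω. -/
open MeasureTheory RealInnerProductSpace Bornology Real
open scoped ENNReal NNReal

noncomputable section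

/-- Euclidean space `ℝⁿ`. -/
abbrev En (n : ℕ) := EuclideanSpace ℝ (Fin n)

/-- The Laplacian `Δf = ∑ᵢ ∂²f/∂xᵢ²`. -/
def lap {n : ℕ} (f : En n → ℝ) (x : En n) : ℝ :=
  ∑ i, fderiv ℝ (fun y => fderiv ℝ f y (EuclideanSpace.single i 1)) x (EuclideanSpace.single i 1)

/-- The divergence `∇·v = ∑ᵢ ∂vᵢ/∂xᵢ`. -/
def divg {n : ℕ} (v : En n → En n) (x : En n) : ℝ :=
  ∑ i, fderiv ℝ (fun y => v y i) x (EuclideanSpace.single i 1)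

/-!
In the plane `Δ‖x - x₀‖² = 4`, so `h = τ + ‖x - x₀‖² / 4` is harmonic on `Ω`. Near `x₀` it is
radial, and the mean value property on circles centred at `x₀` makes it constant there. Harmonic
functions are real-analytic, so `h` is constant on the connected set `Ω`, and by continuity
`τ = c - ‖x - x₀‖² / 4` on `closure Ω`. As `τ = 0` on `∂Ω`, the boundary lies on the sphere of
radius `√(4c)` about `x₀`, and a bounded open set containing `x₀` with this property is the ball.
-/

open InnerProductSpace Laplacian Metric Set Topology Module

namespace InnerProductSpace

section Laplacian

variable {E F G : Type*} [NormedAddCommGroup E] [InnerProductSpace ℝ E] [FiniteDimensional ℝ E]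
  [NormedAddCommGroup F] [InnerProductSpace ℝ F] [FiniteDimensional ℝ F]
  [NormedAddCommGroup G] [NormedSpace ℝ G]

theorem laplacian_comp_linearIsometryEquiv (L : E ≃ₗᵢ[ℝ] F) (f : F → G) (x : E) :
    Δ (f ∘ L) x = Δ f (L x) := by
  set b := stdOrthonormalBasis ℝ E
  have h : iteratedFDeriv ℝ 2 (f ∘ L) x =
      (iteratedFDeriv ℝ 2 f (L x)).compContinuousLinearMap fun _ ↦ (L : E →L[ℝ] F) := by
    simpa [iteratedFDerivWithin_univ] using
      L.toContinuousLinearEquiv.iteratedFDerivWithin_comp_right f uniqueDiffOn_univ (mem_univ _) 2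
  rw [laplacian_eq_iteratedFDeriv_orthonormalBasis _ b,
    laplacian_eq_iteratedFDeriv_orthonormalBasis _ (b.map L)]
  refine Finset.sum_congr rfl fun i _ ↦ ?_
  rw [h, ContinuousMultilinearMap.compContinuousLinearMap_apply, OrthonormalBasis.map_apply]
  congr 1
  ext j
  fin_cases j <;> rfl

theorem HarmonicAt.comp_linearIsometryEquiv {f : F → G} (L : E ≃ₗᵢ[ℝ] F)
    {x : E} (hf : HarmonicAt f (L x)) : HarmonicAt (f ∘ L) x := by
  refine ⟨hf.1.comp x L.contDiff.contDiffAt, ?_⟩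
  filter_upwards [L.continuous.continuousAt.eventually hf.2] with y hy
  rw [laplacian_comp_linearIsometryEquiv, hy, Pi.zero_apply, Pi.zero_apply]

theorem laplacian_norm_sub_sq (x₀ x : E) :
    Δ (fun y ↦ ‖y - x₀‖ ^ 2) x = 2 * finrank ℝ E := by
  have hD : fderiv ℝ (fun y ↦ ‖y - x₀‖ ^ 2) = fun y ↦ (2 : ℝ) • innerSL ℝ (y - x₀) := by
    ext y v
    rw [(hasFDerivAt_sub_const x₀).norm_sq.fderiv]
    simp
  have hD2 : HasFDerivAt (fun y ↦ (2 : ℝ) • innerSL ℝ (y - x₀)) ((2 : ℝ) • innerSL ℝ) x :=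
    ((innerSL ℝ).hasFDerivAt.comp x ((hasFDerivAt_id x).sub_const x₀)).const_smul (2 : ℝ)
  set b := stdOrthonormalBasis ℝ E
  rw [laplacian_eq_iteratedFDeriv_orthonormalBasis _ b]
  simp only [iteratedFDeriv_two_apply, Matrix.cons_val_zero, Matrix.cons_val_one, hD, hD2.fderiv]
  change ∑ i, 2 * ⟪b i, b i⟫_ℝ = _
  simp [b.norm_eq_one, mul_comm]

theorem harmonicOnNhd_add_norm_sub_sq [Nontrivial E] {f : E → ℝ} {Ω : Set E}
    (hΩ : IsOpen Ω) (hf : ContDiffOn ℝ 2 f Ω) (hΔ : ∀ x ∈ Ω, Δ f x = -1) (x₀ : E) :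
    HarmonicOnNhd (f + (2 * finrank ℝ E : ℝ)⁻¹ • fun x ↦ ‖x - x₀‖ ^ 2) Ω := by
  have hq : ContDiff ℝ 2 fun x : E ↦ ‖x - x₀‖ ^ 2 :=
    (contDiff_norm_sq ℝ).comp (contDiff_id.sub contDiff_const)
  have hn : (2 * finrank ℝ E : ℝ) ≠ 0 := by
    have := Module.finrank_pos (R := ℝ) (M := E)
    positivity
  have hcq : ContDiff ℝ 2 ((2 * finrank ℝ E : ℝ)⁻¹ • fun x : E ↦ ‖x - x₀‖ ^ 2) :=
    contDiff_const.smul hq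
  intro x hx
  refine ⟨(hf.contDiffAt (hΩ.mem_nhds hx)).add hcq.contDiffAt, ?_⟩
  filter_upwards [hΩ.mem_nhds hx] with y hy
  rw [(hf.contDiffAt (hΩ.mem_nhds hy)).laplacian_add hcq.contDiffAt,
    laplacian_smul _ hq.contDiffAt, hΔ y hy,
    laplacian_norm_sub_sq, smul_eq_mul, inv_mul_cancel₀ hn, Pi.zero_apply, neg_add_cancel]

end Laplacian

section Planar

variable {E F : Type*} [NormedAddCommGroup E] [InnerProductSpace ℝ E] [FiniteDimensional ℝ E]
  [NormedAddCommGroup F] [NormedSpace ℝ F] [CompleteSpace F]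

theorem nonempty_complex_linearIsometryEquiv (hE : finrank ℝ E = 2) : Nonempty (ℂ ≃ₗᵢ[ℝ] E) :=
  ⟨Complex.isometryOfOrthonormal ((stdOrthonormalBasis ℝ E).reindex (finCongr hE))⟩

theorem HarmonicAt.analyticAt_of_finrank_eq_two (hE : finrank ℝ E = 2) {f : E → ℝ}
    {x : E} (hf : HarmonicAt f x) : AnalyticAt ℝ f x := by
  obtain ⟨L⟩ := nonempty_complex_linearIsometryEquiv hE
  obtain ⟨z, rfl⟩ := L.surjective x
  have hfL : AnalyticAt ℝ (f ∘ L) z := HarmonicAt.analyticAt (hf.comp_linearIsometryEquiv L)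
  simpa [Function.comp_def] using hfL.comp_of_eq
    (L.symm.toContinuousLinearEquiv.toContinuousLinearMap.analyticAt (L z)) (by simp)

theorem HarmonicOnNhd.eqOn_ball_of_radial {f : ℂ → F} {c : ℂ} {ε : ℝ}
    {φ : ℝ → F} (hf : HarmonicOnNhd f (ball c ε)) (hrad : ∀ z ∈ ball c ε, f z = φ ‖z - c‖) :
    EqOn f (fun _ ↦ f c) (ball c ε) := by
  intro z hz
  have hr : ‖z - c‖ < ε := mem_ball_iff_norm.mp hz
  have hsphere : ∀ w ∈ sphere c |‖z - c‖|, f w = φ ‖z - c‖ := by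
    intro w hw
    rw [abs_norm, mem_sphere_iff_norm] at hw
    rw [hrad w (mem_ball_iff_norm.mpr (hw ▸ hr)), hw]
  calc f z = φ ‖z - c‖ := hrad z hz
    _ = circleAverage f c ‖z - c‖ := (circleAverage_const_on_circle hsphere).symm
    _ = f c := (hf.mono (closedBall_subset_ball (by rwa [abs_norm]))).circleAverage_eq

theorem HarmonicOnNhd.eqOn_ball_of_radial_of_finrank_eq_two (hE : finrank ℝ E = 2)
    {f : E → F} {x₀ : E} {ε : ℝ} {φ : ℝ → F} (hf : HarmonicOnNhd f (ball x₀ ε))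
    (hrad : ∀ x ∈ ball x₀ ε, f x = φ ‖x - x₀‖) :
    EqOn f (fun _ ↦ f x₀) (ball x₀ ε) := by
  obtain ⟨L⟩ := nonempty_complex_linearIsometryEquiv hE
  obtain ⟨c, rfl⟩ := L.surjective x₀
  have hball : ∀ z, L z ∈ ball (L c) ε ↔ z ∈ ball c ε := fun z ↦ by
    rw [mem_ball, mem_ball, L.dist_map]
  have hfL : HarmonicOnNhd (f ∘ L) (ball c ε) := fun z hz ↦
    (hf (L z) ((hball z).mpr hz)).comp_linearIsometryEquiv L
  have hradL : ∀ z ∈ ball c ε, (f ∘ L) z = φ ‖z - c‖ := fun z hz ↦ by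
    rw [Function.comp_apply, hrad _ ((hball z).mpr hz), ← map_sub, L.norm_map]
  intro x hx
  obtain ⟨z, rfl⟩ := L.surjective x
  exact hfL.eqOn_ball_of_radial hradL ((hball z).mp hx)

end Planar

end InnerProductSpace

theorem lap_eq_laplacian {n : ℕ} {f : En n → ℝ} {x : En n} (hf : ContDiffAt ℝ 2 f x) :
    lap f x = Δ f x := by
  have hd : DifferentiableAt ℝ (fderiv ℝ f) x :=
    (hf.fderiv_right (m := 1) le_rfl).differentiableAt one_ne_zero
  rw [lap, laplacian_eq_iteratedFDeriv_orthonormalBasis f (EuclideanSpace.basisFun (Fin n) ℝ)]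
  refine Finset.sum_congr rfl fun i _ ↦ ?_
  rw [iteratedFDeriv_two_apply, fderiv_clm_apply hd (differentiableAt_const _)]
  simp

theorem eq_ball_of_frontier_subset_sphere {E : Type*} [NormedAddCommGroup E] [NormedSpace ℝ E]
    [ProperSpace E] [Nontrivial E] {Ω : Set E} {x₀ : E} {R : ℝ} (hΩo : IsOpen Ω)
    (hΩb : IsBounded Ω) (hx₀ : x₀ ∈ Ω) (hfr : frontier Ω ⊆ sphere x₀ R) :
    Ω = ball x₀ R := by
  have hΩ_ne_univ : Ω ≠ univ := fun h ↦ NormedSpace.unbounded_univ ℝ E (h ▸ hΩb)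
  obtain ⟨y, hy⟩ := nonempty_frontier_iff.mpr ⟨⟨x₀, hx₀⟩, hΩ_ne_univ⟩
  have hR : 0 < R := by
    rw [← mem_sphere.mp (hfr hy)]
    refine dist_pos.mpr fun hyx ↦ ?_
    rw [hΩo.frontier_eq, hyx] at hy
    exact hy.2 hx₀
  have hclosure : ∀ p ∈ closure Ω, p ∉ Ω → dist p x₀ = R := fun p hp hpΩ ↦
    mem_sphere.mp (hfr (hΩo.frontier_eq ▸ ⟨hp, hpΩ⟩))
  apply Subset.antisymm
  · obtain ⟨q, hq, hqmax⟩ := hΩb.isCompact_closure.exists_isMaxOn ⟨x₀, subset_closure hx₀⟩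
      (continuous_id.dist continuous_const).continuousOn
    have hΩq : Ω ⊆ ball x₀ (dist q x₀) := by
      have hq0 : dist q x₀ ≠ 0 :=
        ((hR.trans_le ((mem_sphere.mp (hfr hy)).symm.trans_le
          (hqmax (frontier_subset_closure hy))))).ne'
      rw [← interior_closedBall x₀ hq0]
      exact interior_maximal (fun p hp ↦ mem_closedBall.mpr (hqmax (subset_closure hp))) hΩo
    rwa [hclosure q hq fun hqΩ ↦ (mem_ball.mp (hΩq hqΩ)).false] at hΩq
  · refine (convex_ball x₀ R).isPreconnected.subset_of_closure_inter_subset hΩo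
      ⟨x₀, mem_ball_self hR, hx₀⟩ fun p ⟨hp, hpR⟩ ↦ ?_
    by_contra hpΩ
    exact (mem_ball.mp hpR).ne (hclosure p hp hpΩ)

theorem torsion_eqOn_closure_of_radial {Ω : Set (En 2)} (hΩo : IsOpen Ω)
    (hΩc : IsPreconnected Ω) {τ : En 2 → ℝ} (hτC : ContDiffOn ℝ 2 τ Ω)
    (hcont : ContinuousOn τ (closure Ω)) (hpde : ∀ x ∈ Ω, -lap τ x = 1) {x₀ : En 2}
    (hx₀ : x₀ ∈ Ω) {g : ℝ → ℝ} {ε : ℝ} (hε : 0 < ε) (hball : ball x₀ ε ⊆ Ω)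
    (hrad : ∀ x ∈ ball x₀ ε, τ x = g ‖x - x₀‖) :
    ∃ c : ℝ, EqOn τ (fun x ↦ c - ‖x - x₀‖ ^ 2 / 4) (closure Ω) := by
  have hdim : finrank ℝ (En 2) = 2 := finrank_euclideanSpace_fin
  set h := τ + (2 * finrank ℝ (En 2) : ℝ)⁻¹ • fun x ↦ ‖x - x₀‖ ^ 2 with h_def
  have h_apply : ∀ x, h x = τ x + ‖x - x₀‖ ^ 2 / 4 := fun x ↦ by
    simp only [h_def, hdim, Pi.add_apply, Pi.smul_apply, smul_eq_mul]
    norm_num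
    ring
  have hharm : HarmonicOnNhd h Ω := harmonicOnNhd_add_norm_sub_sq hΩo hτC (fun x hx ↦ by
    rw [← lap_eq_laplacian (hτC.contDiffAt (hΩo.mem_nhds hx))]
    linarith [hpde x hx]) x₀
  have hball_const : EqOn h (fun _ ↦ h x₀) (ball x₀ ε) :=
    (hharm.mono hball).eqOn_ball_of_radial_of_finrank_eq_two hdim (φ := fun r ↦ g r + r ^ 2 / 4)
      fun x hx ↦ by rw [h_apply, hrad x hx]
  have hconst : EqOn h (fun _ ↦ h x₀) Ω :=
    AnalyticOnNhd.eqOn_of_preconnected_of_eventuallyEq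
      (fun x hx ↦ (hharm x hx).analyticAt_of_finrank_eq_two hdim) analyticOnNhd_const
      hΩc hx₀ (Filter.eventually_of_mem (ball_mem_nhds x₀ hε) hball_const)
  refine ⟨h x₀, EqOn.of_subset_closure (fun x hx ↦ ?_) hcont (by fun_prop) subset_closure
    subset_rfl⟩
  linarith [hconst hx, h_apply x]

theorem stmt4_general (Ω : Set (En 2)) (hΩo : IsOpen Ω) (hΩb : IsBounded Ω) (hΩc : IsConnected Ω)
    (τ : En 2 → ℝ) (hτC : ContDiffOn ℝ 2 τ Ω) (hcont : ContinuousOn τ (closure Ω))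
    (hpde : ∀ x ∈ Ω, -lap τ x = 1) (hbd : ∀ x ∈ frontier Ω, τ x = 0)
    (x₀ : En 2) (hx₀ : x₀ ∈ Ω) (g : ℝ → ℝ) (ε : ℝ) (hε : 0 < ε)
    (hball : Metric.ball x₀ ε ⊆ Ω)
    (hrad : ∀ x ∈ Metric.ball x₀ ε, τ x = g ‖x - x₀‖) :
    ∃ R > 0, Ω = Metric.ball x₀ R ∧ ∀ x ∈ Ω, τ x = (R ^ 2 - ‖x - x₀‖ ^ 2) / 4 := by
  obtain ⟨c, hτ⟩ := torsion_eqOn_closure_of_radial hΩo hΩc.isPreconnected hτC hcont hpde hx₀ hε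
    hball hrad
  have hfr : frontier Ω ⊆ sphere x₀ √(4 * c) := fun y hy ↦ by
    have hy0 : τ y = c - ‖y - x₀‖ ^ 2 / 4 := hτ (frontier_subset_closure hy)
    rw [mem_sphere_iff_norm, ← Real.sqrt_sq (norm_nonneg (y - x₀))]
    congr 1
    linarith [hbd y hy]
  have hΩ : Ω = ball x₀ √(4 * c) := eq_ball_of_frontier_subset_sphere hΩo hΩb hx₀ hfr
  have hR : 0 < √(4 * c) := nonempty_ball.mp (hΩ ▸ ⟨x₀, hx₀⟩ : (ball x₀ _).Nonempty)
  refine ⟨_, hR, hΩ, fun x hx ↦ ?_⟩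
  rw [hτ (subset_closure hx), Real.sq_sqrt (Real.sqrt_pos.mp hR).le]
  ring

/-- If the torsion function `τ⁰` of a bounded simply connected planar domain
`Ω` is radial about some `x₀ ∈ Ω` in a neighborhood of `x₀`, then `Ω` is a disc centered at
`x₀` of some radius `R` and `τ⁰(x) = (R² − |x − x₀|²)/4` on `Ω`. -/
theorem stmt4 (Ω : Set (En 2)) (hΩo : IsOpen Ω) (hΩb : IsBounded Ω) (hΩc : IsConnected Ω)
    (hΩs : SimplyConnectedSpace Ω)
    (τ : En 2 → ℝ) (hτC : ContDiffOn ℝ 2 τ Ω) (hcont : ContinuousOn τ (closure Ω))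
    (hpde : ∀ x ∈ Ω, -lap τ x = 1) (hbd : ∀ x ∈ frontier Ω, τ x = 0)
    (x₀ : En 2) (hx₀ : x₀ ∈ Ω) (g : ℝ → ℝ) (ε : ℝ) (hε : 0 < ε)
    (hball : Metric.ball x₀ ε ⊆ Ω)
    (hrad : ∀ x ∈ Metric.ball x₀ ε, τ x = g ‖x - x₀‖) :
    ∃ R > 0, Ω = Metric.ball x₀ R ∧ ∀ x ∈ Ω, τ x = (R ^ 2 - ‖x - x₀‖ ^ 2) / 4 :=
  stmt4_general Ω hΩo hΩb hΩc τ hτC hcont hpde hbd x₀ hx₀ g ε hε hball hrad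
end
end

section
/- Let Ω ⊂ ℝ² be a bounded domain and suppose ψ : Ω → ℝ is continuous, vanishes on ∂Ω, attains its maximum at a unique point x₀, and solves the eikonal equation |∇ψ| = 1 on Ω ∖ {x₀} in the classical sense with ψ ∈ C¹(Ω ∖ {x₀}), with all level sets of ψ connected. Then Ω is a disc centered at x₀ and ψ(x) = dist(x, ∂Ω). -/
/-!
For `θ < 1`, a function `f` with `‖Df‖ = 1` plus a `θ`-Lipschitz function has no local minimum:
it decreases in some direction. Hence the minimum of `ψ + θ·|· - x|`, resp. `-ψ + θ·|· - x|`, over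
the compact set `Ω̄` is attained on `∂Ω` or at `x₀`, which yields `θ·dist(x, ∂Ω) ≤ ψ(x)` for
`x ≠ x₀` and `θ·|x - x₀| ≤ ψ(x₀) - ψ(x)`; let `θ → 1`. The mean value theorem along the segment
from `x₀` to a nearest point of `Ωᶜ` gives `ψ(x₀) ≤ dist(x₀, Ωᶜ)`. So
`Ω ⊆ B(x₀, ψ(x₀)) ⊆ Ω`, and on this disc `ψ(x) = ψ(x₀) - |x - x₀| = dist(x, ∂Ω)`.
-/

open MeasureTheory RealInnerProductSpace Bornology Real
open scoped ENNReal NNReal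

noncomputable section

open Metric Set

theorem le_of_forall_nnreal_lt_one_mul_le {a b : ℝ} (h : ∀ θ : ℝ≥0, θ < 1 → θ * a ≤ b) :
    a ≤ b := by
  have hb : 0 ≤ b := by simpa using h 0 one_pos
  rcases le_or_gt a 0 with ha | ha
  · linarith
  rw [← Real.coe_toNNReal a ha.le, ← Real.coe_toNNReal b hb, NNReal.coe_le_coe]
  refine NNReal.le_of_forall_lt_one_mul_le fun θ hθ => ?_
  rw [← NNReal.coe_le_coe, NNReal.coe_mul, Real.coe_toNNReal a ha.le, Real.coe_toNNReal b hb]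
  exact h θ hθ

theorem lipschitzWith_mul_dist {α : Type*} [PseudoMetricSpace α] (θ : ℝ≥0) (x : α) :
    LipschitzWith θ fun y => θ * dist y x :=
  LipschitzWith.of_le_add_mul θ fun a b => by
    rw [← mul_add]
    exact mul_le_mul_of_nonneg_left ((dist_triangle a b x).trans_eq (add_comm _ _)) θ.coe_nonneg

theorem norm_fderiv_le_of_isLocalMin_add {E : Type*} [NormedAddCommGroup E] [NormedSpace ℝ E]
    {f g : E → ℝ} {z : E} {K : ℝ≥0} (hf : DifferentiableAt ℝ f z) (hg : LipschitzWith K g)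
    (hmin : IsLocalMin (fun y => f y + g y) z) : ‖fderiv ℝ f z‖ ≤ K := by
  have hlower : ∀ w, -(K * ‖w‖) ≤ fderiv ℝ f z w := by
    intro w
    have hline : HasDerivAt (fun s : ℝ => z + s • w) w 0 := by
      simpa using ((hasDerivAt_id (0 : ℝ)).smul_const w).const_add z
    have hderiv : HasDerivAt (fun s : ℝ => f (z + s • w)) (fderiv ℝ f z w) 0 :=
      hf.hasFDerivAt.comp_hasDerivAt_of_eq 0 hline (by simp)
    have hmin' : IsLocalMin (fun s : ℝ => f (z + s • w) + g (z + s • w)) 0 :=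
      IsLocalMin.comp_continuous (f := fun y => f y + g y) (by simpa using hmin)
        hline.continuousAt
    refine ge_of_tendsto hderiv.tendsto_slope_zero_right ?_
    filter_upwards [nhdsWithin_le_nhds hmin', self_mem_nhdsWithin]
      with s (hs : f (z + (0 : ℝ) • w) + _ ≤ _) (hs0 : 0 < s)
    have hgs : g (z + s • w) ≤ g z + K * (s * ‖w‖) := by
      simpa [dist_eq_norm, norm_smul, abs_of_pos hs0] using hg.le_add_mul (z + s • w) z
    rw [zero_smul, add_zero] at hs
    rw [zero_add, zero_smul, add_zero, smul_eq_mul, le_inv_mul_iff₀ hs0]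
    linarith
  refine ContinuousLinearMap.opNorm_le_bound _ K.2 fun w => abs_le.2 ⟨hlower w, ?_⟩
  simpa using hlower (-w)

theorem norm_image_sub_le_of_norm_fderiv_le_openSegment {E : Type*} [NormedAddCommGroup E]
    [NormedSpace ℝ E] {f : E → ℝ} {a b : E} {C : ℝ} (hf : ContinuousOn f (segment ℝ a b))
    (hd : ∀ z ∈ openSegment ℝ a b, DifferentiableAt ℝ f z)
    (hC : ∀ z ∈ openSegment ℝ a b, ‖fderiv ℝ f z‖ ≤ C) : ‖f b - f a‖ ≤ C * ‖b - a‖ := by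
  have hmaps : MapsTo (AffineMap.lineMap a b) (Icc (0 : ℝ) 1) (segment ℝ a b) := by
    rw [segment_eq_image_lineMap]; exact mapsTo_image _ _
  have hopen : ∀ t ∈ Ioo (0 : ℝ) 1, AffineMap.lineMap a b t ∈ openSegment ℝ a b := by
    rw [openSegment_eq_image_lineMap]; exact fun t ht => mem_image_of_mem _ ht
  obtain ⟨t, ht, hslope⟩ := exists_hasDerivAt_eq_slope (f ∘ AffineMap.lineMap a b)
    (fun t => fderiv ℝ f (AffineMap.lineMap a b t) (b - a)) zero_lt_one
    (hf.comp AffineMap.lineMap_continuous.continuousOn hmaps)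
    fun t ht => (hd _ (hopen t ht)).hasFDerivAt.comp_hasDerivAt t AffineMap.hasDerivAt_lineMap
  simp only [Function.comp, AffineMap.lineMap_apply_one, AffineMap.lineMap_apply_zero, sub_zero,
    div_one] at hslope
  rw [← hslope]
  exact (ContinuousLinearMap.le_opNorm _ _).trans
    (mul_le_mul_of_nonneg_right (hC _ (hopen t ht)) (norm_nonneg _))

section Eikonal

variable {E : Type*} [NormedAddCommGroup E] [NormedSpace ℝ E]

def SolvesEikonal (f : E → ℝ) (s : Set E) : Prop :=
  ∀ z ∈ s, DifferentiableAt ℝ f z ∧ ‖fderiv ℝ f z‖ = 1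

variable {Ω : Set E} {ψ : E → ℝ} {x₀ : E}

theorem SolvesEikonal.neg {s : Set E} (hψ : SolvesEikonal ψ s) :
    SolvesEikonal (fun y => -ψ y) s :=
  fun z hz => ⟨(hψ z hz).1.neg, by rw [fderiv_fun_neg, norm_neg, (hψ z hz).2]⟩

theorem ContDiffOn.solvesEikonal {F : Type*} [NormedAddCommGroup F] [InnerProductSpace ℝ F]
    [CompleteSpace F] {f : F → ℝ} {s : Set F} (hf : ContDiffOn ℝ 1 f s) (hs : IsOpen s)
    (heik : ∀ x ∈ s, ‖gradient f x‖ = 1) : SolvesEikonal f s := fun z hz =>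
  ⟨(hf.differentiableOn one_ne_zero).differentiableAt (hs.mem_nhds hz), by
    rw [← toDual_gradient, LinearIsometryEquiv.norm_map, heik z hz]⟩

theorem SolvesEikonal.mem_frontier_or_eq_of_isMinOn_add {g : E → ℝ} {K : ℝ≥0} {z : E}
    (hΩ : IsOpen Ω) (hψ : SolvesEikonal ψ (Ω \ {x₀})) (hK : K < 1) (hg : LipschitzWith K g)
    (hz : z ∈ closure Ω) (hmin : IsMinOn (fun y => ψ y + g y) (closure Ω) z) :
    z ∈ frontier Ω ∨ z = x₀ := by
  by_contra! h
  have hzΩ : z ∈ Ω := by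
    by_contra hzΩ
    exact h.1 (hΩ.frontier_eq ▸ ⟨hz, hzΩ⟩)
  obtain ⟨hd, hnorm⟩ := hψ z ⟨hzΩ, h.2⟩
  have := norm_fderiv_le_of_isLocalMin_add hd hg
    (hmin.isLocalMin (Filter.mem_of_superset (hΩ.mem_nhds hzΩ) subset_closure))
  rw [hnorm] at this
  exact hK.not_ge (by exact_mod_cast this)

theorem SolvesEikonal.infDist_frontier_le [ProperSpace E] (hΩ : IsOpen Ω) (hΩb : IsBounded Ω)
    (hcont : ContinuousOn ψ (closure Ω)) (hbd : ∀ y ∈ frontier Ω, ψ y = 0)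
    (hψ : SolvesEikonal ψ (Ω \ {x₀})) {x : E}
    (hx : x ∈ closure Ω) (hxx₀ : ψ x < ψ x₀) : infDist x (frontier Ω) ≤ ψ x := by
  refine le_of_forall_nnreal_lt_one_mul_le fun θ hθ => ?_
  obtain ⟨z, hz, hmin⟩ := hΩb.isCompact_closure.exists_isMinOn (f := fun y => ψ y + θ * dist y x)
    ⟨x, hx⟩ (hcont.add (by fun_prop))
  have hzx : ψ z + θ * dist z x ≤ ψ x := by simpa using hmin hx
  rcases hψ.mem_frontier_or_eq_of_isMinOn_add hΩ hθ (lipschitzWith_mul_dist θ x) hz hmin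
    with hfr | rfl
  · calc θ * infDist x (frontier Ω) ≤ θ * dist z x :=
          mul_le_mul_of_nonneg_left (dist_comm x z ▸ infDist_le_dist_of_mem hfr) θ.coe_nonneg
      _ ≤ ψ x := by linarith [hbd z hfr]
  · linarith [mul_nonneg θ.coe_nonneg (dist_nonneg (x := z) (y := x))]

theorem SolvesEikonal.dist_le_sub [ProperSpace E] (hΩ : IsOpen Ω) (hΩb : IsBounded Ω)
    (hcont : ContinuousOn ψ (closure Ω)) (hbd : ∀ y ∈ frontier Ω, ψ y = 0)
    (hψ : SolvesEikonal ψ (Ω \ {x₀})) {x : E}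
    (hx : x ∈ closure Ω) (hpos : 0 < ψ x) : dist x x₀ ≤ ψ x₀ - ψ x := by
  refine le_of_forall_nnreal_lt_one_mul_le fun θ hθ => ?_
  obtain ⟨z, hz, hmin⟩ := hΩb.isCompact_closure.exists_isMinOn (f := fun y => -ψ y + θ * dist y x)
    ⟨x, hx⟩ (hcont.neg.add (by fun_prop))
  have hzx : -ψ z + θ * dist z x ≤ -ψ x := by
    simpa only [dist_self, mul_zero, add_zero] using isMinOn_iff.1 hmin x hx
  rcases hψ.neg.mem_frontier_or_eq_of_isMinOn_add hΩ hθ (lipschitzWith_mul_dist θ x) hz hmin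
    with hfr | rfl
  · linarith [hbd z hfr, mul_nonneg θ.coe_nonneg (dist_nonneg (x := z) (y := x))]
  · rw [dist_comm]; linarith

theorem SolvesEikonal.le_infDist_compl [FiniteDimensional ℝ E] [Nontrivial E] (hΩ : IsOpen Ω)
    (hΩb : IsBounded Ω) (hcont : ContinuousOn ψ (closure Ω)) (hbd : ∀ y ∈ frontier Ω, ψ y = 0)
    (hψ : SolvesEikonal ψ (Ω \ {x₀})) (hx₀ : x₀ ∈ Ω) : ψ x₀ ≤ infDist x₀ Ωᶜ := by
  obtain ⟨p, hp, hdist⟩ := exists_mem_frontier_infDist_compl_eq_dist hx₀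
    fun h => NormedSpace.unbounded_univ ℝ E (h ▸ hΩb)
  have hpx₀ : p ≠ x₀ := fun h => (hΩ.frontier_eq ▸ hp).2 (h ▸ hx₀)
  have hseg : openSegment ℝ x₀ p ⊆ Ω \ {x₀} := by
    rw [openSegment_eq_image_lineMap]
    rintro _ ⟨t, ht, rfl⟩
    have hd : dist (AffineMap.lineMap x₀ p t) x₀ = t * infDist x₀ Ωᶜ := by
      rw [dist_lineMap_left, hdist, Real.norm_of_nonneg ht.1.le]
    have hpos : 0 < infDist x₀ Ωᶜ := hdist ▸ dist_pos.2 hpx₀.symm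
    refine ⟨ball_infDist_compl_subset (x := x₀) ?_, fun h => ?_⟩
    · rw [mem_ball, hd]
      exact mul_lt_of_lt_one_left hpos ht.2
    · rw [mem_singleton_iff.1 h, dist_self] at hd
      exact (mul_pos ht.1 hpos).ne hd
  have hsegcl : segment ℝ x₀ p ⊆ closure Ω := by
    rw [← insert_endpoints_openSegment]
    exact insert_subset (subset_closure hx₀) (insert_subset (frontier_subset_closure hp)
      (hseg.trans (sdiff_subset.trans subset_closure)))
  have := norm_image_sub_le_of_norm_fderiv_le_openSegment (hcont.mono hsegcl)
    (fun z hz => (hψ z (hseg hz)).1) (fun z hz => (hψ z (hseg hz)).2.le)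
  rw [hbd p hp, zero_sub, norm_neg, one_mul, ← dist_eq_norm, dist_comm, ← hdist] at this
  exact (le_abs_self _).trans this

theorem SolvesEikonal.pos [ProperSpace E] [Nontrivial E] (hΩ : IsOpen Ω) (hΩb : IsBounded Ω)
    (hcont : ContinuousOn ψ (closure Ω)) (hbd : ∀ y ∈ frontier Ω, ψ y = 0)
    (hψ : SolvesEikonal ψ (Ω \ {x₀})) (hx₀ : x₀ ∈ Ω)
    (hmax : ∀ x ∈ closure Ω, x ≠ x₀ → ψ x < ψ x₀) {x : E} (hx : x ∈ Ω) : 0 < ψ x := by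
  have hΩfr : Disjoint Ω (frontier Ω) := by
    rw [hΩ.frontier_eq]; exact disjoint_sdiff_right
  obtain ⟨p, hp⟩ : (frontier Ω).Nonempty :=
    nonempty_frontier_iff.2 ⟨⟨x₀, hx₀⟩, fun h => NormedSpace.unbounded_univ ℝ E (h ▸ hΩb)⟩
  rcases eq_or_ne x x₀ with rfl | hne
  · simpa [hbd p hp] using hmax p (frontier_subset_closure hp) (hΩfr.ne_of_mem hx hp).symm
  · refine ((isClosed_frontier.notMem_iff_infDist_pos ⟨p, hp⟩).1
      (hΩfr.notMem_of_mem_left hx)).trans_le ?_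
    exact hψ.infDist_frontier_le hΩ hΩb hcont hbd (subset_closure hx)
      (hmax x (subset_closure hx) hne)

end Eikonal

theorem stmt6_general (Ω : Set (En 2)) (hΩo : IsOpen Ω) (hΩb : IsBounded Ω)
    (ψ : En 2 → ℝ) (hcont : ContinuousOn ψ (closure Ω))
    (hbd : ∀ x ∈ frontier Ω, ψ x = 0)
    (x₀ : En 2) (hx₀ : x₀ ∈ Ω)
    (hmax : ∀ x ∈ closure Ω, x ≠ x₀ → ψ x < ψ x₀)
    (hC1 : ContDiffOn ℝ 1 ψ (Ω \ {x₀}))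
    (heik : ∀ x ∈ Ω \ {x₀}, ‖gradient ψ x‖ = 1) :
    ∃ R > 0, Ω = Metric.ball x₀ R ∧ ∀ x ∈ Ω, ψ x = Metric.infDist x (frontier Ω) := by
  have hψ := hC1.solvesEikonal (hΩo.sdiff isClosed_singleton) heik
  have hpos : ∀ x ∈ Ω, 0 < ψ x := fun x hx => hψ.pos hΩo hΩb hcont hbd hx₀ hmax hx
  have hclimb : ∀ x ∈ Ω, dist x x₀ ≤ ψ x₀ - ψ x := fun x hx =>
    hψ.dist_le_sub hΩo hΩb hcont hbd (subset_closure hx) (hpos x hx)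
  have hball : Ω = ball x₀ (ψ x₀) := by
    refine Subset.antisymm (fun x hx => mem_ball.2 (by linarith [hclimb x hx, hpos x hx])) ?_
    exact (ball_subset_ball (hψ.le_infDist_compl hΩo hΩb hcont hbd hx₀)).trans
      ball_infDist_compl_subset
  refine ⟨ψ x₀, hpos x₀ hx₀, hball, fun x hx => ?_⟩
  obtain ⟨p, hp, hpd⟩ := (isCompact_sphere x₀ (ψ x₀)).exists_infDist_eq_dist
    (NormedSpace.sphere_nonempty.2 (hpos x₀ hx₀).le) x
  have hfr : frontier Ω = sphere x₀ (ψ x₀) := by rw [hball, frontier_ball _ (hpos x₀ hx₀).ne']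
  rw [mem_sphere] at hp
  rw [hfr, hpd]
  refine le_antisymm (by linarith [hclimb x hx, dist_triangle p x x₀, dist_comm x p]) ?_
  rcases eq_or_ne x x₀ with rfl | hne
  · rw [dist_comm, hp]
  · rw [← hpd, ← hfr]
    exact hψ.infDist_frontier_le hΩo hΩb hcont hbd (subset_closure hx)
      (hmax x (subset_closure hx) hne)

/-- If `ψ` is continuous on `Ω̄`, vanishes on `∂Ω`, attains its maximum only
at `x₀`, is `C¹` on `Ω ∖ {x₀}` where it solves the eikonal equation `|∇ψ| = 1`, and all its
level sets are connected, then `Ω` is a disc centered at `x₀` and `ψ(x) = dist(x, ∂Ω)`. -/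
theorem stmt6 (Ω : Set (En 2)) (hΩo : IsOpen Ω) (hΩb : IsBounded Ω) (hΩc : IsConnected Ω)
    (ψ : En 2 → ℝ) (hcont : ContinuousOn ψ (closure Ω))
    (hbd : ∀ x ∈ frontier Ω, ψ x = 0)
    (x₀ : En 2) (hx₀ : x₀ ∈ Ω)
    (hmax : ∀ x ∈ closure Ω, x ≠ x₀ → ψ x < ψ x₀)
    (hC1 : ContDiffOn ℝ 1 ψ (Ω \ {x₀}))
    (heik : ∀ x ∈ Ω \ {x₀}, ‖gradient ψ x‖ = 1)
    (hlvl : ∀ h : ℝ, IsPreconnected {x ∈ Ω | ψ x = h}) :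
    ∃ R > 0, Ω = Metric.ball x₀ R ∧ ∀ x ∈ Ω, ψ x = Metric.infDist x (frontier Ω) :=
  stmt6_general Ω hΩo hΩb ψ hcont hbd x₀ hx₀ hmax hC1 heik
end
end
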